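/- Let σ ∈ VSubst and let x ↦ t be a binding with x ∈ hvars(σ) and vars(t) ⊆ hvars(σ). Suppose that each of rt(x, σ) and rt(t, σ) is either a ground term or a variable. Then for every τ ∈ mgs(σ ∪ {x = t}): hvars(σ) ⊆ hvars(τ). -/

import Mathlib

/-!  Common infrastructure: finite and rational trees, substitutions in
rational solved form, the theory RT of rational trees, finiteness /
groundness operators, and Boolean functions over a set of variables of
interest. -/

/-- A signature: a type of function symbols with fixed arities. -/
structure Signature where
  Sym : Type
  arity : Sym → ℕ

/-- Finite terms over a signature, with variables drawn from `ℕ`. -/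
inductive HTerm (Sg : Signature) : Type where
  | var : ℕ → HTerm Sg
  | app : (f : Sg.Sym) → (Fin (Sg.arity f) → HTerm Sg) → HTerm Sg

namespace HTerm

variable {Sg : Signature}

/-- The set of variables occurring in a finite term. -/
def varsIn : HTerm Sg → Set ℕ
  | .var x => {x}
  | .app _ ts => ⋃ i, (ts i).varsIn

/-- Homomorphic application of a variable assignment to a finite term. -/
def substRaw (m : ℕ → HTerm Sg) : HTerm Sg → HTerm Sg
  | .var x => m x
  | .app f ts => .app f (fun i => (ts i).substRaw m)

/-- The label of the node of a finite term at a given path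
(`none` if there is no node at that path). -/
def labelAt : HTerm Sg → List ℕ → Option (Sg.Sym ⊕ ℕ)
  | .var x, [] => some (Sum.inr x)
  | .app f _, [] => some (Sum.inl f)
  | .var _, _ :: _ => none
  | .app f ts, i :: p => if h : i < Sg.arity f then (ts ⟨i, h⟩).labelAt p else none

end HTerm

/-- Substitutions: maps from variables to finite terms that are the identity
on all but finitely many variables. -/
structure Subst (Sg : Signature) where
  map : ℕ → HTerm Sg
  finite : {x : ℕ | map x ≠ HTerm.var x}.Finite

namespace Subst

variable {Sg : Signature}

/-- The domain of a substitution. -/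
def dom (σ : Subst Sg) : Set ℕ := {x | σ.map x ≠ HTerm.var x}

/-- Application of a substitution to a finite term. -/
def apply (σ : Subst Sg) (t : HTerm Sg) : HTerm Sg := t.substRaw σ.map

/-- `σ.iter i t` is `t σ^i`, the `i`-fold application of `σ` to `t`. -/
def iter (σ : Subst Sg) (i : ℕ) (t : HTerm Sg) : HTerm Sg := σ.apply^[i] t

/-- The set of variables occurring in the bindings of `σ`. -/
def varsOf (σ : Subst Sg) : Set ℕ := σ.dom ∪ ⋃ x ∈ σ.dom, (σ.map x).varsIn

/-- The number of bindings of `σ`. -/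
noncomputable def numBindings (σ : Subst Sg) : ℕ := σ.finite.toFinset.card

/-- The set of bindings of `σ`, as pairs (variable, term). -/
def bindings (σ : Subst Sg) : Set (ℕ × HTerm Sg) :=
  {p | p.1 ∈ σ.dom ∧ p.2 = σ.map p.1}

end Subst

/-- A set of bindings forms a circular substitution
`{x₁ ↦ x₂, …, x_{n-1} ↦ x_n, x_n ↦ x₁}` for some `n > 1` and
distinct variables `x₁, …, x_n`. -/
def IsCircularBindingSet {Sg : Signature} (S : Set (ℕ × HTerm Sg)) : Prop :=
  ∃ n : ℕ, 1 < n ∧ ∃ x : ℕ → ℕ,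
    (∀ i j, i < n → j < n → x i = x j → i = j) ∧
    S = {p | ∃ i < n, p = (x i, HTerm.var (x ((i + 1) % n)))}

/-- `σ` is in rational solved form: no subset of its bindings forms a
circular substitution.  `RSubst` is the set of such substitutions. -/
def Subst.InRSF {Sg : Signature} (σ : Subst Sg) : Prop :=
  ∀ S ⊆ σ.bindings, ¬ IsCircularBindingSet S

/-- Variable-idempotent substitutions:
`vars(tσσ) = vars(tσ)` for every finite term `t`. -/
def Subst.IsVSubst {Sg : Signature} (σ : Subst Sg) : Prop :=
  σ.InRSF ∧ ∀ t : HTerm Sg, (σ.apply (σ.apply t)).varsIn = (σ.apply t).varsIn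

/-- The finiteness functions `hvars_n`. -/
def Subst.hvarsN {Sg : Signature} (σ : Subst Sg) : ℕ → Set ℕ
  | 0 => {y | y ∉ σ.dom}
  | n + 1 => σ.hvarsN n ∪ {y | y ∈ σ.dom ∧ (σ.map y).varsIn ⊆ σ.hvarsN n}

/-- The finiteness operator `hvars` (the increasing chain `hvars_n` is
stationary, so its union equals its stationary value). -/
def Subst.hvars {Sg : Signature} (σ : Subst Sg) : Set ℕ := ⋃ n, σ.hvarsN n

/-- The occurrence functions `occ_n`. -/
def Subst.occN {Sg : Signature} (σ : Subst Sg) : ℕ → ℕ → Set ℕ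
  | 0, v => {v} \ σ.dom
  | n + 1, v => {y | ((σ.map y).varsIn ∩ σ.occN n v).Nonempty}

/-- The occurrence operator `occ`. -/
noncomputable def Subst.occ {Sg : Signature} (σ : Subst Sg) (v : ℕ) : Set ℕ :=
  σ.occN σ.numBindings v

/-- The groundness operator `gvars`. -/
noncomputable def Subst.gvars {Sg : Signature} (σ : Subst Sg) : Set ℕ :=
  {y | y ∈ σ.dom ∧ ∀ v ∈ σ.varsOf, y ∉ σ.occ v}

/-! Possibly infinite terms, represented by their labeling functions
(partial maps from finite paths to labels; a label is either a function
symbol or a variable). -/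

/-- The set of variables occurring in a possibly infinite term. -/
def treeVars {Sg : Signature} (u : List ℕ → Option (Sg.Sym ⊕ ℕ)) : Set ℕ :=
  {x | ∃ p, u p = some (Sum.inr x)}

/-- A possibly infinite term is finite (a member of `HTerms`) iff its set of
nodes is finite. -/
def treeFinite {Sg : Signature} (u : List ℕ → Option (Sg.Sym ⊕ ℕ)) : Prop :=
  {p | (u p).isSome}.Finite

/-- A possibly infinite term is linear iff each variable labels at most one
of its leaves. -/
def treeLinear {Sg : Signature} (u : List ℕ → Option (Sg.Sym ⊕ ℕ)) : Prop :=
  ∀ (y : ℕ) (p q : List ℕ),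
    u p = some (Sum.inr y) → u q = some (Sum.inr y) → p = q

/-- A variable `y` occurs linearly in a possibly infinite term iff it labels
exactly one of its leaves. -/
def occursLinearlyIn {Sg : Signature} (y : ℕ)
    (u : List ℕ → Option (Sg.Sym ⊕ ℕ)) : Prop :=
  ∃! p : List ℕ, u p = some (Sum.inr y)

/-- A possibly infinite term is a variable. -/
def treeIsVar {Sg : Signature} (u : List ℕ → Option (Sg.Sym ⊕ ℕ)) : Prop :=
  ∃ y : ℕ, u = (HTerm.var y : HTerm Sg).labelAt

/- `σ.rt t` is the limit of the converging sequence `t σ^i` of finite terms: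
its label at each path is the eventual (stable) label of the terms `t σ^i`
at that path. -/
open Classical in
noncomputable def Subst.rt {Sg : Signature} (σ : Subst Sg) (t : HTerm Sg) :
    List ℕ → Option (Sg.Sym ⊕ ℕ) := fun p =>
  if h : ∃ v : Option (Sg.Sym ⊕ ℕ), ∃ N : ℕ, ∀ i ≥ N, (σ.iter i t).labelAt p = v
  then h.choose else none

/-! The theory RT of rational trees, semantically. -/

/-- A first-order structure for the signature `Sg`. -/
structure Struc (Sg : Signature) where
  carrier : Type
  interp : (f : Sg.Sym) → (Fin (Sg.arity f) → carrier) → carrier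

/-- Evaluation of a finite term in a structure under a valuation. -/
def HTerm.eval {Sg : Signature} (A : Struc Sg) (v : ℕ → A.carrier) :
    HTerm Sg → A.carrier
  | .var x => v x
  | .app f ts => A.interp f (fun i => (ts i).eval A v)

/-- Sets of equations between finite terms. -/
abbrev EqSet (Sg : Signature) := Set (HTerm Sg × HTerm Sg)

/-- A valuation satisfies a set of equations (read as their conjunction). -/
def Struc.Sat {Sg : Signature} (A : Struc Sg) (v : ℕ → A.carrier)
    (E : EqSet Sg) : Prop :=
  ∀ e ∈ E, e.1.eval A v = e.2.eval A v

/-- A substitution read as the set of equations `x = σ(x)`, `x ∈ dom σ`. -/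
def Subst.eqs {Sg : Signature} (σ : Subst Sg) : EqSet Sg :=
  {e | ∃ x ∈ σ.dom, e = (HTerm.var x, σ.map x)}

/-- The variables occurring in a set of equations. -/
def eqsVars {Sg : Signature} (E : EqSet Sg) : Set ℕ :=
  ⋃ e ∈ E, (e.1.varsIn ∪ e.2.varsIn)

/-- A model of the theory RT of rational trees: a structure satisfying the
identity axioms (injectivity of each function symbol and distinctness of the
ranges of distinct function symbols) and, for each substitution in rational
solved form, the corresponding uniqueness axiom. -/
structure RTModel (Sg : Signature) where
  struc : Struc Sg
  inj : ∀ (f : Sg.Sym) (a b : Fin (Sg.arity f) → struc.carrier),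
    struc.interp f a = struc.interp f b → a = b
  distinct : ∀ (f g : Sg.Sym) (a : Fin (Sg.arity f) → struc.carrier)
    (b : Fin (Sg.arity g) → struc.carrier), f ≠ g → struc.interp f a ≠ struc.interp g b
  uniqueness : ∀ σ : Subst Sg, σ.InRSF → ∀ v : ℕ → struc.carrier,
    ∃! w : ℕ → struc.carrier,
      (∀ x ∉ σ.dom, w x = v x) ∧ struc.Sat w σ.eqs

/-- `RT ⊢ ∀(E → F)`. -/
def RTImp {Sg : Signature} (E F : EqSet Sg) : Prop :=
  ∀ (A : RTModel Sg) (v : ℕ → A.struc.carrier), A.struc.Sat v E → A.struc.Sat v F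

/-- `RT ⊢ ∀(E ↔ F)`. -/
def RTEquiv {Sg : Signature} (E F : EqSet Sg) : Prop :=
  ∀ (A : RTModel Sg) (v : ℕ → A.struc.carrier), A.struc.Sat v E ↔ A.struc.Sat v F

/-- The set of relevant most general solutions of a set of equations in RT. -/
def mgsRT {Sg : Signature} (E : EqSet Sg) : Set (Subst Sg) :=
  {σ | σ.InRSF ∧ RTEquiv σ.eqs E ∧ σ.varsOf ⊆ eqsVars E}

/-- `↓σ`: the substitutions obtainable as most general solutions of `σ`
together with some further set of equations in rational solved form. -/
def downRT {Sg : Signature} (σ : Subst Sg) : Set (Subst Sg) :=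
  {τ | ∃ σ' : Subst Sg, σ'.InRSF ∧ τ ∈ mgsRT (σ.eqs ∪ σ'.eqs)}

/-- Two valuations agree outside a set `W` of variables. -/
def agreesOff {α : Type _} (W : Set ℕ) (v w : ℕ → α) : Prop :=
  ∀ x ∉ W, v x = w x

/-- `RT ⊢ ∀(∃W.E ↔ ∃W.F)`. -/
def RTExistsEquiv {Sg : Signature} (W : Set ℕ) (E F : EqSet Sg) : Prop :=
  ∀ (A : RTModel Sg) (v : ℕ → A.struc.carrier),
    (∃ w, agreesOff W w v ∧ A.struc.Sat w E) ↔
    (∃ w, agreesOff W w v ∧ A.struc.Sat w F)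

/-- `∃∃x.{σ}` relative to the set `VI` of the variables of interest:
the substitutions `σ'` in rational solved form with
`RT ⊢ ∀(∃ (Vars ∖ VI) . (σ' ↔ ∃x.σ))`. -/
def projExists {Sg : Signature} (VI : Set ℕ) (x : ℕ) (σ : Subst Sg) :
    Set (Subst Sg) :=
  {σ' | σ'.InRSF ∧ ∀ (A : RTModel Sg) (v : ℕ → A.struc.carrier),
    ∃ w, agreesOff VIᶜ w v ∧
      (A.struc.Sat w σ'.eqs ↔ ∃ u, agreesOff {x} u w ∧ A.struc.Sat u σ.eqs)}

/-- `∃∃x.Σ` for a set `Σ` of substitutions. -/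
def projExistsSet {Sg : Signature} (VI : Set ℕ) (x : ℕ) (S : Set (Subst Sg)) :
    Set (Subst Sg) := ⋃ σ ∈ S, projExists VI x σ

/-! Boolean valuations and Boolean functions over the variables of
interest (semantically: only the values on `VI` matter). -/

abbrev BVal := ℕ → Prop
abbrev BFun := BVal → Prop

/-- Entailment `φ ⊨ ψ` of Boolean functions. -/
def BFun.Entails (φ ψ : BFun) : Prop := ∀ a, φ a → ψ a

/-- The Boolean function of a variable. -/
def bVar (x : ℕ) : BFun := fun a => a x

def bAnd (φ ψ : BFun) : BFun := fun a => φ a ∧ ψ a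
def bOr (φ ψ : BFun) : BFun := fun a => φ a ∨ ψ a
def bNot (φ : BFun) : BFun := fun a => ¬ φ a
def bIff (φ ψ : BFun) : BFun := fun a => φ a ↔ ψ a

/-- `⋀S`: the conjunction of the variables in `S` (`⊤` if `S = ∅`). -/
def bConj (S : Set ℕ) : BFun := fun a => ∀ x ∈ S, a x

/-- `∃x.φ = φ[1/x] ∨ φ[0/x]` (Schröder's elimination principle). -/
def bExists (x : ℕ) (φ : BFun) : BFun :=
  fun a => φ (Function.update a x True) ∨ φ (Function.update a x False)

/-- `∃S.φ`: elimination of all the variables of `S`. -/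
def bExistsSet (S : Set ℕ) (φ : BFun) : BFun :=
  fun a => ∃ b : BVal, (∀ x ∉ S, b x = a x) ∧ φ b

/-- `true(φ)`: the variables of `VI` necessarily true for `φ`. -/
def trueVars (VI : Set ℕ) (φ : BFun) : Set ℕ := {x ∈ VI | ∀ a, φ a → a x}

/-- `false(φ)`: the variables of `VI` necessarily false for `φ`. -/
def falseVars (VI : Set ℕ) (φ : BFun) : Set ℕ := {x ∈ VI | ∀ a, φ a → ¬ a x}

/-- `φ ∈ Pos`: `φ` is true under the everything-is-true assignment. -/
def IsPos (φ : BFun) : Prop := φ (fun _ => True)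

/-- `pos(φ) = φ ∨ ⋀VI`. -/
def bPos (VI : Set ℕ) (φ : BFun) : BFun := bOr φ (bConj VI)

/-- `hval(σ)`: the valuation assigning true exactly to the variables of
`hvars(σ)`. -/
def Subst.hval {Sg : Signature} (σ : Subst Sg) : BVal := fun x => x ∈ σ.hvars

/-- `gval(σ)`: the valuation assigning true exactly to the variables of
`gvars(σ)`. -/
noncomputable def Subst.gval {Sg : Signature} (σ : Subst Sg) : BVal :=
  fun x => x ∈ σ.gvars

/-- `γ_H(h)`. -/
def gammaH {Sg : Signature} (h : Set ℕ) : Set (Subst Sg) :=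
  {σ | σ.InRSF ∧ h ⊆ σ.hvars}

/-- `γ_FD(φ)`. -/
def gammaFD {Sg : Signature} (φ : BFun) : Set (Subst Sg) :=
  {σ | σ.InRSF ∧ ∀ τ ∈ downRT σ, φ τ.hval}

/-- `γ_GD(ψ)`. -/
noncomputable def gammaGD {Sg : Signature} (ψ : BFun) : Set (Subst Sg) :=
  {σ | σ.InRSF ∧ ∀ τ ∈ downRT σ, ψ τ.gval}

/-- The substitution consisting of the single binding `x ↦ t`. -/
def singleSubst {Sg : Signature} (x : ℕ) (t : HTerm Sg) : Subst Sg where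
  map := fun y => if y = x then t else HTerm.var y
  finite := Set.Finite.subset (Set.finite_singleton x) (fun y hy => by
    by_contra hxy
    rw [Set.mem_singleton_iff] at hxy
    simp only [Set.mem_setOf_eq] at hy
    exact hy (if_neg hxy))

/-! ### Auxiliary development -/

noncomputable section AMGUAux

namespace AMGU

open Classical

variable {Sg : Signature}

/-- Labels of tree nodes. -/
abbrev L (Sg : Signature) := Sg.Sym ⊕ ℕ

/-- Raw trees: the carrier of our model. -/
abbrev T (Sg : Signature) := List ℕ → Option (L Sg)

/-- The head variable of a term, if any. -/
def varHead : HTerm Sg → Option ℕ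
  | .var z => some z
  | .app _ _ => none

/-- The variable-to-variable successor inside the domain. -/
noncomputable def vsucc (θ : Subst Sg) (z : ℕ) : Option ℕ :=
  if z ∈ θ.dom then
    (varHead (θ.map z)).bind (fun z' => if z' ∈ θ.dom then some z' else none)
  else none

lemma vsucc_spec {θ : Subst Sg} {z z' : ℕ} (h : vsucc θ z = some z') :
    z ∈ θ.dom ∧ θ.map z = .var z' ∧ z' ∈ θ.dom := by
  unfold vsucc at h
  by_cases hz : z ∈ θ.dom
  · rw [if_pos hz] at h
    cases hmap : θ.map z with
    | var z'' =>
      rw [hmap] at h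
      simp only [varHead, Option.bind_some] at h
      by_cases hz'' : z'' ∈ θ.dom
      · rw [if_pos hz''] at h
        cases h
        exact ⟨hz, rfl, hz''⟩
      · rw [if_neg hz''] at h; cases h
    | app f ts => rw [hmap] at h; simp [varHead] at h
  · rw [if_neg hz] at h; cases h

lemma vsucc_intro {θ : Subst Sg} {z z' : ℕ} (hz : z ∈ θ.dom)
    (hmap : θ.map z = .var z') (hz' : z' ∈ θ.dom) : vsucc θ z = some z' := by
  unfold vsucc
  rw [if_pos hz, hmap]
  simp only [varHead, Option.bind_some, if_pos hz']

/-- Iterated successor chain. -/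
noncomputable def ch (θ : Subst Sg) : ℕ → ℕ → Option ℕ
  | 0, z => some z
  | k + 1, z => (vsucc θ z).bind (ch θ k)

lemma ch_zero (θ : Subst Sg) (z : ℕ) : ch θ 0 z = some z := rfl

lemma ch_succ (θ : Subst Sg) (k z : ℕ) :
    ch θ (k + 1) z = (vsucc θ z).bind (ch θ k) := rfl

lemma ch_add (θ : Subst Sg) (a b z) :
    ch θ (a + b) z = (ch θ a z).bind (ch θ b) := by
  induction a generalizing z with
  | zero => simp [ch_zero]
  | succ a ih =>
    rw [show a + 1 + b = (a + b) + 1 by omega, ch_succ, ch_succ]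
    cases vsucc θ z with
    | none => rfl
    | some z' => simp only [Option.bind_some]; exact ih z'

lemma ch_some_of_add {θ : Subst Sg} {a b z u} (h : ch θ (a + b) z = some u) :
    ∃ w, ch θ a z = some w ∧ ch θ b w = some u := by
  rw [ch_add] at h
  cases hc : ch θ a z with
  | none => rw [hc] at h; cases h
  | some w => rw [hc, Option.bind_some] at h; exact ⟨w, rfl, h⟩

lemma ch_mem_dom {θ : Subst Sg} : ∀ {k z u}, ch θ (k + 1) z = some u → u ∈ θ.dom := by
  intro k
  induction k with
  | zero =>
    intro z u h
    rw [ch_succ] at h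
    cases hv : vsucc θ z with
    | none => rw [hv] at h; cases h
    | some z' =>
      rw [hv, Option.bind_some, ch_zero] at h
      cases h
      exact (vsucc_spec hv).2.2
  | succ k ih =>
    intro z u h
    rw [ch_succ] at h
    cases hv : vsucc θ z with
    | none => rw [hv] at h; cases h
    | some z' => rw [hv, Option.bind_some] at h; exact ih h

/-- No cycles in the successor chain (from rational solved form). -/
lemma no_cycle {θ : Subst Sg} (hθ : θ.InRSF) :
    ∀ n z, 1 ≤ n → ch θ n z = some z → False := by
  intro n z hn hcyc
  have hex : ∃ m, ch θ (m + 1) z = some z := ⟨n - 1, by rwa [Nat.sub_add_cancel hn]⟩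
  have hmin : ch θ (Nat.find hex + 1) z = some z := Nat.find_spec hex
  set N : ℕ := Nat.find hex + 1 with hN
  have hsome : ∀ i ≤ N, ∃ u, ch θ i z = some u := by
    intro i hi
    obtain ⟨w, hw, _⟩ := ch_some_of_add (a := i) (b := N - i)
      (by rwa [Nat.add_sub_cancel' hi])
    exact ⟨w, hw⟩
  let u : ℕ → ℕ := fun i => (ch θ i z).getD 0
  have hu : ∀ i ≤ N, ch θ i z = some (u i) := by
    intro i hi
    obtain ⟨w, hw⟩ := hsome i hi
    simp [u, hw]
  have hu0 : u 0 = z := by simp [u, ch_zero]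
  have huN : u N = z := by simp [u, hmin]
  have hstep : ∀ i, i + 1 ≤ N → vsucc θ (u i) = some (u (i + 1)) := by
    intro i hi
    have h1 : ch θ (i + 1) z = some (u (i + 1)) := hu _ hi
    have h2 : ch θ i z = some (u i) := hu _ (by omega)
    rw [ch_add, h2, Option.bind_some, ch_succ] at h1
    cases hv : vsucc θ (u i) with
    | none => rw [hv] at h1; cases h1
    | some w => rw [hv, Option.bind_some, ch_zero] at h1; cases h1; rfl
  have hinj : ∀ i j, i < N → j < N → u i = u j → i = j := by
    intro i j hi hj hij
    by_contra hne
    wlog hlt : i < j generalizing i j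
    · exact this j i hj hi hij.symm (Ne.symm hne) (by omega)
    have h1 : ch θ j z = some (u j) := hu _ (by omega)
    have h2 : ch θ (N - j) (u j) = some z := by
      have hNj : ch θ (j + (N - j)) z = some z := by
        rw [show j + (N - j) = N by omega]; exact hmin
      obtain ⟨w, hw, hw2⟩ := ch_some_of_add hNj
      rw [h1] at hw; cases hw
      exact hw2
    have h3 : ch θ (i + (N - j)) z = some z := by
      rw [ch_add, hu i (by omega), Option.bind_some, hij]
      exact h2
    have hpos : 1 ≤ i + (N - j) := by omega
    rw [show i + (N - j) = (i + (N - j) - 1) + 1 by omega] at h3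
    have := Nat.find_le (h := hex) h3
    omega
  have hN2 : 1 < N := by
    by_contra h
    have hNeq : N = 1 := by omega
    have hv := hstep 0 (by omega)
    rw [hu0] at hv
    rw [show (0 : ℕ) + 1 = N from hNeq.symm, huN] at hv
    obtain ⟨hz, hmap, _⟩ := vsucc_spec hv
    exact hz hmap
  apply hθ {p | ∃ i < N, p = (u i, HTerm.var (u ((i + 1) % N)))}
  · rintro ⟨a, s⟩ ⟨i, hi, hp⟩
    cases hp
    obtain ⟨hdom, hmap, _⟩ := vsucc_spec (hstep i hi)
    refine ⟨hdom, ?_⟩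
    show HTerm.var (u ((i + 1) % N)) = θ.map (u i)
    rw [hmap]
    congr 1
    rcases Nat.lt_or_ge (i + 1) N with h | h
    · rw [Nat.mod_eq_of_lt h]
    · rw [show i + 1 = N by omega, Nat.mod_self, hu0, huN]
  · exact ⟨N, hN2, u, hinj, rfl⟩

/-! ### Rank of variables along variable chains -/

lemma ch_eventually_none {θ : Subst Sg} (hθ : θ.InRSF) (z : ℕ) :
    ch θ (θ.finite.toFinset.card + 2) z = none := by
  by_contra hsome'
  set B := θ.finite.toFinset.card with hB
  obtain ⟨u', hu'⟩ := Option.ne_none_iff_exists'.mp hsome'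
  have hsome : ∀ i ≤ B + 2, ∃ w, ch θ i z = some w := by
    intro i hi
    obtain ⟨w, hw, _⟩ := ch_some_of_add (a := i) (b := B + 2 - i)
      (by rw [Nat.add_sub_cancel' hi]; exact hu')
    exact ⟨w, hw⟩
  let u : ℕ → ℕ := fun i => (ch θ i z).getD 0
  have hu : ∀ i ≤ B + 2, ch θ i z = some (u i) := by
    intro i hi
    obtain ⟨w, hw⟩ := hsome i hi
    simp [u, hw]
  have hmem : ∀ i ∈ Finset.range (B + 1), u (i + 1) ∈ θ.finite.toFinset := by
    intro i hi
    rw [Finset.mem_range] at hi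
    have := ch_mem_dom (hu (i + 1) (by omega))
    rwa [Set.Finite.mem_toFinset]
  obtain ⟨i, hi, j, hj, hne, hij⟩ :=
    Finset.exists_ne_map_eq_of_card_lt_of_maps_to
      (by rw [Finset.card_range]; omega) hmem
  rw [Finset.mem_range] at hi hj
  wlog hlt : i < j generalizing i j
  · exact this j hj i hi (Ne.symm hne) hij.symm (by omega)
  -- cycle at u (i+1) of length j - i
  have h1 : ch θ (i + 1) z = some (u (i + 1)) := hu _ (by omega)
  have h2 : ch θ (j + 1) z = some (u (j + 1)) := hu _ (by omega)
  rw [show j + 1 = (i + 1) + (j - i) by omega] at h2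
  obtain ⟨w, hw, hw2⟩ := ch_some_of_add h2
  rw [h1] at hw; cases hw
  rw [show i + 1 + (j - i) = j + 1 by omega] at hw2
  rw [← hij] at hw2
  exact no_cycle hθ (j - i) (u (i + 1)) (by omega) hw2

/-- The rank of a variable: number of chain steps before the chain dies. -/
noncomputable def vrank (θ : Subst Sg) (z : ℕ) : ℕ :=
  if h : ∃ k, ch θ k z = none then Nat.find h else 0

lemma vrank_le {θ : Subst Sg} (hθ : θ.InRSF) (z : ℕ) :
    vrank θ z ≤ θ.finite.toFinset.card + 2 := by
  unfold vrank
  rw [dif_pos ⟨_, ch_eventually_none hθ z⟩]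
  exact Nat.find_le (ch_eventually_none hθ z)

lemma vrank_lt {θ : Subst Sg} (hθ : θ.InRSF) {z z' : ℕ}
    (h : vsucc θ z = some z') : vrank θ z' < vrank θ z := by
  have hex : ∃ k, ch θ k z = none := ⟨_, ch_eventually_none hθ z⟩
  have hex' : ∃ k, ch θ k z' = none := ⟨_, ch_eventually_none hθ z'⟩
  unfold vrank
  rw [dif_pos hex, dif_pos hex']
  have hfz : ch θ (Nat.find hex) z = none := Nat.find_spec hex
  have hpos : 1 ≤ Nat.find hex := by
    rcases Nat.eq_zero_or_pos (Nat.find hex) with h0 | h0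
    · rw [h0, ch_zero] at hfz; cases hfz
    · exact h0
  have : ch θ (Nat.find hex - 1) z' = none := by
    rw [show Nat.find hex = (Nat.find hex - 1) + 1 by omega, ch_succ, h,
      Option.bind_some] at hfz
    exact hfz
  have := Nat.find_le (h := hex') this
  omega

/-- Rank of terms, used as termination measure for `res`. -/
noncomputable def termRank (θ : Subst Sg) : HTerm Sg → ℕ
  | .var z => if z ∈ θ.dom then vrank θ z + 1 else 0
  | .app _ _ => 0

lemma termRank_lt {θ : Subst Sg} (hθ : θ.InRSF) {z : ℕ} (hz : z ∈ θ.dom) :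
    termRank θ (θ.map z) < termRank θ (.var z) := by
  have hR : termRank θ (HTerm.var z) = vrank θ z + 1 := by
    simp [termRank, hz]
  rw [hR]
  cases hmap : θ.map z with
  | var z' =>
    by_cases hz' : z' ∈ θ.dom
    · have : termRank θ (HTerm.var z') = vrank θ z' + 1 := by simp [termRank, hz']
      rw [this]
      have := vrank_lt hθ (vsucc_intro hz hmap hz')
      omega
    · simp [termRank, hz']
  | app f ts => simp [termRank]

/-- The resolution walk: the value at a path of any solution of `θ`
extending the valuation `v`. -/
noncomputable def res (θ : Subst Sg) (hθ : θ.InRSF) (v : ℕ → T Sg) :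
    HTerm Sg → List ℕ → Option (L Sg)
  | .var z, p =>
    if h : z ∈ θ.dom then res θ hθ v (θ.map z) p else v z p
  | .app f _, [] => some (Sum.inl f)
  | .app f ts, i :: q =>
    if h : i < Sg.arity f then res θ hθ v (ts ⟨i, h⟩) q else none
termination_by s p => (p.length, termRank θ s)
decreasing_by
  · exact Prod.Lex.right _ (termRank_lt hθ h)
  · exact Prod.Lex.left _ _ (by simp)

lemma res_var {θ : Subst Sg} (hθ : θ.InRSF) (v : ℕ → T Sg) (z : ℕ) (p : List ℕ) :
    res θ hθ v (.var z) p =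
      if z ∈ θ.dom then res θ hθ v (θ.map z) p else v z p := by
  rw [res]
  split <;> rfl

lemma res_app_nil {θ : Subst Sg} (hθ : θ.InRSF) (v : ℕ → T Sg) (f : Sg.Sym)
    (ts : Fin (Sg.arity f) → HTerm Sg) :
    res θ hθ v (.app f ts) [] = some (Sum.inl f) := by
  rw [res]

lemma res_app_cons {θ : Subst Sg} (hθ : θ.InRSF) (v : ℕ → T Sg) (f : Sg.Sym)
    (ts : Fin (Sg.arity f) → HTerm Sg) (i : ℕ) (q : List ℕ) :
    res θ hθ v (.app f ts) (i :: q) =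
      if h : i < Sg.arity f then res θ hθ v (ts ⟨i, h⟩) q else none := by
  rw [res]
/-! ### The tree model -/

/-- Interpretation of function symbols on raw trees. -/
noncomputable def interpT (f : Sg.Sym) (ts : Fin (Sg.arity f) → T Sg) : T Sg
  | [] => some (Sum.inl f)
  | i :: q => if h : i < Sg.arity f then ts ⟨i, h⟩ q else none

/-- The structure of raw trees. -/
noncomputable def strucT (Sg : Signature) : Struc Sg :=
  ⟨T Sg, interpT⟩

lemma eval_var (w : ℕ → T Sg) (z : ℕ) :
    (HTerm.var z).eval (strucT Sg) w = w z := rfl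

lemma eval_app (w : ℕ → T Sg) (f : Sg.Sym) (ts : Fin (Sg.arity f) → HTerm Sg) :
    (HTerm.app f ts).eval (strucT Sg) w
      = interpT f (fun i => (ts i).eval (strucT Sg) w) := rfl

lemma eval_app_nil (w : ℕ → T Sg) (f : Sg.Sym) (ts : Fin (Sg.arity f) → HTerm Sg) :
    (HTerm.app f ts).eval (strucT Sg) w [] = some (Sum.inl f) := rfl

lemma eval_app_cons (w : ℕ → T Sg) (f : Sg.Sym) (ts : Fin (Sg.arity f) → HTerm Sg)
    (i : ℕ) (q : List ℕ) :
    (HTerm.app f ts).eval (strucT Sg) w (i :: q)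
      = if h : i < Sg.arity f then (ts ⟨i, h⟩).eval (strucT Sg) w q else none := rfl

/-- `res` agrees with evaluation under the canonical solution. -/
lemma res_eval {θ : Subst Sg} (hθ : θ.InRSF) (v : ℕ → T Sg) :
    ∀ (s : HTerm Sg) (p : List ℕ),
      s.eval (strucT Sg) (fun z => res θ hθ v (.var z)) p = res θ hθ v s p := by
  intro s
  induction s with
  | var z => intro p; rfl
  | app f ts ih =>
    intro p
    cases p with
    | nil => rw [eval_app_nil, res_app_nil]
    | cons i q =>
      rw [eval_app_cons, res_app_cons]
      by_cases h : i < Sg.arity f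
      · rw [dif_pos h, dif_pos h, ih]
      · rw [dif_neg h, dif_neg h]

/-- Satisfaction of the equations of a substitution, unfolded. -/
lemma sat_eqs_iff {θ : Subst Sg} (w : ℕ → T Sg) :
    (strucT Sg).Sat w θ.eqs ↔
      ∀ z ∈ θ.dom, w z = (θ.map z).eval (strucT Sg) w := by
  constructor
  · intro h z hz
    exact h (HTerm.var z, θ.map z) ⟨z, hz, rfl⟩
  · rintro h e ⟨z, hz, rfl⟩
    exact h z hz

/-- Any solution of `θ` extending `v` is computed by `res`. -/
lemma sol_eq_res {θ : Subst Sg} (hθ : θ.InRSF) {v w : ℕ → T Sg}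
    (hw : (strucT Sg).Sat w θ.eqs) (hv : ∀ z ∉ θ.dom, w z = v z) :
    ∀ (s : HTerm Sg) (p : List ℕ),
      s.eval (strucT Sg) w p = res θ hθ v s p
  | .var z, p => by
    rw [res_var, eval_var]
    by_cases hz : z ∈ θ.dom
    · rw [if_pos hz, (sat_eqs_iff w).mp hw z hz]
      exact sol_eq_res hθ hw hv (θ.map z) p
    · rw [if_neg hz, hv z hz]
  | .app f ts, [] => by rw [eval_app_nil, res_app_nil]
  | .app f ts, i :: q => by
    rw [eval_app_cons, res_app_cons]
    by_cases h : i < Sg.arity f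
    · rw [dif_pos h, dif_pos h]
      exact sol_eq_res hθ hw hv (ts ⟨i, h⟩) q
    · rw [dif_neg h, dif_neg h]
termination_by s p => (p.length, termRank θ s)
decreasing_by
  · exact Prod.Lex.right _ (termRank_lt hθ hz)
  · exact Prod.Lex.left _ _ (by simp)

/-- The raw-tree model of RT. -/
noncomputable def modelT (Sg : Signature) : RTModel Sg where
  struc := strucT Sg
  inj := by
    intro f a b h
    funext i
    funext q
    have := congrFun h (i.1 :: q)
    have h2 : interpT f a (i.1 :: q) = interpT f b (i.1 :: q) := this
    simpa [interpT, i.isLt] using h2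
  distinct := by
    intro f g a b hfg h
    have h1 : interpT f a [] = interpT g b [] := congrFun h []
    simp only [interpT, Option.some_inj] at h1
    exact hfg (Sum.inl.inj h1)
  uniqueness := by
    intro θ hθ v
    refine ⟨fun z => res θ hθ v (.var z), ⟨?_, ?_⟩, ?_⟩
    · intro z hz
      funext p
      show res θ hθ v (.var z) p = v z p
      rw [res_var hθ v z p, if_neg hz]
    · rw [sat_eqs_iff]
      intro z hz
      funext p
      rw [res_eval hθ v (θ.map z) p, res_var hθ v z p, if_pos hz]
    · rintro w ⟨hv, hw⟩
      funext z
      funext p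
      have := sol_eq_res hθ hw (fun z hz => hv z hz) (.var z) p
      rw [eval_var w z] at this
      exact this
/-! ### `hvars` facts -/

lemma hvarsN_mono {θ : Subst Sg} : ∀ {m n : ℕ}, m ≤ n → θ.hvarsN m ⊆ θ.hvarsN n := by
  intro m n h
  induction h with
  | refl => exact subset_rfl
  | step h ih => exact ih.trans (by intro z hz; exact Set.mem_union_left _ hz)

lemma varsIn_finite : ∀ s : HTerm Sg, s.varsIn.Finite
  | .var z => Set.finite_singleton z
  | .app f ts => Set.finite_iUnion (fun i => varsIn_finite (ts i))

lemma not_mem_dom_hvars {θ : Subst Sg} {z : ℕ} (h : z ∉ θ.dom) : z ∈ θ.hvars :=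
  Set.mem_iUnion.mpr ⟨0, h⟩

lemma exists_level {θ : Subst Sg} {S : Set ℕ} (hfin : S.Finite) (h : S ⊆ θ.hvars) :
    ∃ N, S ⊆ θ.hvarsN N := by
  refine Set.Finite.induction_on (motive := fun S _ => S ⊆ θ.hvars → ∃ N, S ⊆ θ.hvarsN N)
    S hfin (fun _ => ⟨0, by simp⟩) ?_ h
  intro a S ha hS ih h
  obtain ⟨N1, hN1⟩ := ih (Set.Subset.trans (Set.subset_insert a S) h)
  obtain ⟨N2, hN2⟩ := Set.mem_iUnion.mp (h (Set.mem_insert a S))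
  refine ⟨max N1 N2, ?_⟩
  intro y hy
  rcases Set.mem_insert_iff.mp hy with rfl | hy
  · exact hvarsN_mono (le_max_right N1 N2) hN2
  · exact hvarsN_mono (le_max_left N1 N2) (hN1 hy)

lemma mem_hvars_succ {θ : Subst Sg} {z : ℕ} (hz : z ∈ θ.dom)
    (h : (θ.map z).varsIn ⊆ θ.hvars) : z ∈ θ.hvars := by
  obtain ⟨N, hN⟩ := exists_level (varsIn_finite (θ.map z)) h
  exact Set.mem_iUnion.mpr ⟨N + 1, Set.mem_union_right _ ⟨hz, hN⟩⟩

lemma not_hvars {θ : Subst Sg} {z : ℕ} (h : z ∉ θ.hvars) :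
    z ∈ θ.dom ∧ ∃ z' ∈ (θ.map z).varsIn, z' ∉ θ.hvars := by
  constructor
  · by_contra hz
    exact h (not_mem_dom_hvars hz)
  · by_contra hz
    push_neg at hz
    have hdom : z ∈ θ.dom := by
      by_contra hd
      exact h (not_mem_dom_hvars hd)
    exact h (mem_hvars_succ hdom hz)
/-! ### Occurrences and depth -/

lemma exists_path_of_mem_vars :
    ∀ {s : HTerm Sg} {z : ℕ}, z ∈ s.varsIn →
      ∃ q, s.labelAt q = some (Sum.inr z) := by
  intro s
  induction s with
  | var y =>
    intro z hz
    rcases hz with rfl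
    exact ⟨[], rfl⟩
  | app f ts ih =>
    intro z hz
    obtain ⟨i, hi⟩ := Set.mem_iUnion.mp hz
    obtain ⟨q, hq⟩ := ih i hi
    refine ⟨i.1 :: q, ?_⟩
    simpa [HTerm.labelAt, i.isLt, Fin.eta] using hq

lemma labelAt_app_ne_nil {f : Sg.Sym} {ts : Fin (Sg.arity f) → HTerm Sg} {q : List ℕ}
    {z : ℕ} (h : (HTerm.app f ts).labelAt q = some (Sum.inr z)) : q ≠ [] := by
  intro rfl'
  subst rfl'
  rw [HTerm.labelAt] at h
  cases h

lemma eval_at_label {w : ℕ → T Sg} :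
    ∀ {s : HTerm Sg} {q : List ℕ} {z : ℕ},
      s.labelAt q = some (Sum.inr z) →
      ∀ r, s.eval (strucT Sg) w (q ++ r) = w z r := by
  intro s
  induction s with
  | var y =>
    intro q z hq r
    cases q with
    | nil =>
      rw [HTerm.labelAt] at hq
      cases hq
      rfl
    | cons i q' => rw [HTerm.labelAt] at hq; cases hq
  | app f ts ih =>
    intro q z hq r
    cases q with
    | nil => rw [HTerm.labelAt] at hq; cases hq
    | cons i q' =>
      rw [HTerm.labelAt] at hq
      by_cases h : i < Sg.arity f
      · rw [dif_pos h] at hq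
        rw [List.cons_append, eval_app_cons, dif_pos h]
        exact ih ⟨i, h⟩ hq r
      · rw [dif_neg h] at hq; cases hq

/-- Solutions are unboundedly deep at variables outside `hvars`. -/
lemma sol_deep {θ : Subst Sg} (hθ : θ.InRSF) {w : ℕ → T Sg}
    (hw : (strucT Sg).Sat w θ.eqs) :
    ∀ (n z : ℕ), z ∉ θ.hvars → ∃ p, n ≤ p.length ∧ (w z p).isSome := by
  intro n z hz
  obtain ⟨hdom, z', hz'mem, hz'⟩ := not_hvars hz
  have hwz : w z = (θ.map z).eval (strucT Sg) w := (sat_eqs_iff w).mp hw z hdom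
  cases hmap : θ.map z with
  | var z'' =>
    have hz'' : z' = z'' := by
      rw [hmap] at hz'mem
      exact hz'mem
    subst hz''
    have hwz' : w z = w z' := by rw [hwz, hmap]; rfl
    rw [hwz']
    exact sol_deep hθ hw n z' hz'
  | app f ts =>
    by_cases hn : n = 0
    · subst hn
      refine ⟨[], by simp, ?_⟩
      rw [hwz, hmap, eval_app_nil]
      rfl
    · rw [hmap] at hz'mem
      obtain ⟨q, hq⟩ := exists_path_of_mem_vars hz'mem
      obtain ⟨p', hp'len, hp'some⟩ := sol_deep hθ hw (n - 1) z' hz'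
      refine ⟨q ++ p', ?_, ?_⟩
      · have hqne : q ≠ [] := labelAt_app_ne_nil hq
        have : 1 ≤ q.length := by
          cases q with
          | nil => exact absurd rfl hqne
          | cons a l => simp
        rw [List.length_append]
        omega
      · rw [hwz, hmap, eval_at_label hq p']
        exact hp'some
termination_by n z => n * (θ.finite.toFinset.card + 3) + vrank θ z
decreasing_by
  · -- variable chain case
    have hdom'' : z' ∈ θ.dom := (not_hvars hz').1
    have := vrank_lt hθ (vsucc_intro hdom hmap hdom'')
    omega
  · -- depth increase case
    have h1 := vrank_le hθ z'
    have h2 : (n - 1) * (θ.finite.toFinset.card + 3) + vrank θ z'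
        < n * (θ.finite.toFinset.card + 3) := by
      rw [show n = (n - 1) + 1 by omega, Nat.succ_mul]
      simp only [Nat.add_sub_cancel]
      omega
    omega
/-! ### Finitely supported trees -/

/-- A tree has finite support. -/
def FinT (u : T Sg) : Prop := {p | (u p).isSome}.Finite

lemma finT_leaf (z : ℕ) : FinT ((HTerm.var z).labelAt : T Sg) := by
  apply Set.Finite.subset (Set.finite_singleton ([] : List ℕ))
  intro p hp
  cases p with
  | nil => rfl
  | cons i q =>
    exfalso
    have : (HTerm.var z : HTerm Sg).labelAt (i :: q) = none := rfl
    rw [Set.mem_setOf_eq, this] at hp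
    cases hp

lemma finT_eval {w : ℕ → T Sg} :
    ∀ {s : HTerm Sg}, (∀ z ∈ s.varsIn, FinT (w z)) →
      FinT (s.eval (strucT Sg) w) := by
  intro s
  induction s with
  | var z =>
    intro h
    exact h z rfl
  | app f ts ih =>
    intro h
    have hsub : {p | ((HTerm.app f ts).eval (strucT Sg) w p).isSome}
        ⊆ insert ([] : List ℕ)
          (⋃ i : Fin (Sg.arity f),
            (List.cons i.1) '' {q | ((ts i).eval (strucT Sg) w q).isSome}) := by
      intro p hp
      cases p with
      | nil => exact Set.mem_insert _ _
      | cons i q =>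
        rw [Set.mem_setOf_eq, eval_app_cons] at hp
        by_cases hi : i < Sg.arity f
        · rw [dif_pos hi] at hp
          refine Set.mem_insert_of_mem _ (Set.mem_iUnion.mpr ⟨⟨i, hi⟩, ⟨q, hp, rfl⟩⟩)
        · rw [dif_neg hi] at hp; cases hp
    refine Set.Finite.subset (Set.Finite.insert _ (Set.finite_iUnion ?_)) hsub
    intro i
    refine Set.Finite.image _ (ih i ?_)
    intro z hz
    exact h z (Set.mem_iUnion.mpr ⟨i, hz⟩)

lemma finT_hvars {θ : Subst Sg} {w : ℕ → T Sg}
    (hw : (strucT Sg).Sat w θ.eqs) (hv : ∀ z ∉ θ.dom, FinT (w z)) :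
    ∀ z ∈ θ.hvars, FinT (w z) := by
  have main : ∀ n, ∀ z ∈ θ.hvarsN n, FinT (w z) := by
    intro n
    induction n with
    | zero => intro z hz; exact hv z hz
    | succ n ih =>
      intro z hz
      rcases hz with hz | ⟨hdom, hsub⟩
      · exact ih z hz
      · rw [(sat_eqs_iff w).mp hw z hdom]
        exact finT_eval (fun z' hz' => ih z' (hsub hz'))
  intro z hz
  obtain ⟨n, hn⟩ := Set.mem_iUnion.mp hz
  exact main n z hn

lemma finT_contradiction {u : T Sg} (hfin : FinT u)
    (hdeep : ∀ n, ∃ p, n ≤ p.length ∧ (u p).isSome) : False := by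
  classical
  obtain ⟨p, hlen, hsome⟩ := hdeep ((hfin.toFinset.sup List.length) + 1)
  have hp : p ∈ hfin.toFinset := (Set.Finite.mem_toFinset (hs := hfin)).mpr hsome
  have := Finset.le_sup (f := List.length) hp
  omega

/-! ### Iteration lemmas -/

lemma apply_var {θ : Subst Sg} (z : ℕ) : θ.apply (.var z) = θ.map z := rfl

lemma apply_app {θ : Subst Sg} (f : Sg.Sym) (ts : Fin (Sg.arity f) → HTerm Sg) :
    θ.apply (.app f ts) = .app f (fun i => θ.apply (ts i)) := rfl

lemma iter_succ {θ : Subst Sg} (i : ℕ) (s : HTerm Sg) :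
    θ.iter (i + 1) s = θ.iter i (θ.apply s) :=
  Function.iterate_succ_apply θ.apply i s

lemma iter_succ' {θ : Subst Sg} (i : ℕ) (s : HTerm Sg) :
    θ.iter (i + 1) s = θ.apply (θ.iter i s) :=
  Function.iterate_succ_apply' θ.apply i s

lemma iter_var_not_dom {θ : Subst Sg} {z : ℕ} (hz : z ∉ θ.dom) :
    ∀ i, θ.iter i (.var z) = .var z := by
  intro i
  induction i with
  | zero => rfl
  | succ i ih =>
    rw [iter_succ', ih, apply_var]
    by_contra h
    exact hz h

lemma iter_app {θ : Subst Sg} (f : Sg.Sym) (ts : Fin (Sg.arity f) → HTerm Sg) :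
    ∀ k, θ.iter k (.app f ts) = .app f (fun i => θ.iter k (ts i)) := by
  intro k
  induction k with
  | zero => rfl
  | succ k ih =>
    rw [iter_succ', ih, apply_app]
    congr 1
    funext i
    rw [iter_succ']

/-- Evaluation under a solution is invariant under applying the substitution. -/
lemma eval_apply_sol {θ : Subst Sg} {w : ℕ → T Sg}
    (hw : (strucT Sg).Sat w θ.eqs) (s : HTerm Sg) :
    (θ.apply s).eval (strucT Sg) w = s.eval (strucT Sg) w := by
  have key : ∀ s' : HTerm Sg,
      (s'.substRaw θ.map).eval (strucT Sg) w
        = s'.eval (strucT Sg) (fun z => (θ.map z).eval (strucT Sg) w) := by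
    intro s'
    induction s' with
    | var z => rfl
    | app f ts ih =>
      show HTerm.eval _ _ (.app f (fun i => (ts i).substRaw θ.map)) = _
      simp only [HTerm.eval]
      congr 1
      funext i
      exact ih i
  show (s.substRaw θ.map).eval (strucT Sg) w = _
  rw [key]
  congr 1
  funext z
  by_cases hz : z ∈ θ.dom
  · exact ((sat_eqs_iff w).mp hw z hz).symm
  · have : θ.map z = .var z := by
      by_contra h
      exact hz h
    rw [this]
    rfl

lemma eval_iter_sol {θ : Subst Sg} {w : ℕ → T Sg}
    (hw : (strucT Sg).Sat w θ.eqs) (N : ℕ) (s : HTerm Sg) :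
    (θ.iter N s).eval (strucT Sg) w = s.eval (strucT Sg) w := by
  induction N generalizing s with
  | zero => rfl
  | succ N ih =>
    rw [iter_succ, ih (θ.apply s), eval_apply_sol hw]

/-! ### Decoding the limit hypotheses -/

lemma rt_eq_of_stable {θ : Subst Sg} {s : HTerm Sg} {q : List ℕ}
    {c : Option (L Sg)} {N : ℕ}
    (h : ∀ i ≥ N, (θ.iter i s).labelAt q = c) : θ.rt s q = c := by
  unfold Subst.rt
  have hex : ∃ v : Option (Sg.Sym ⊕ ℕ), ∃ M : ℕ, ∀ i ≥ M, (θ.iter i s).labelAt q = v :=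
    ⟨c, N, h⟩
  rw [dif_pos hex]
  obtain ⟨M, hM⟩ := hex.choose_spec
  have h1 := hM (max N M) (le_max_right N M)
  have h2 := h (max N M) (le_max_left N M)
  rw [h2] at h1
  exact h1.symm

lemma labelAt_nil_inr {s : HTerm Sg} {z : ℕ}
    (h : s.labelAt [] = some (Sum.inr z)) : s = .var z := by
  cases s with
  | var y =>
    rw [HTerm.labelAt] at h
    cases h
    rfl
  | app f ts => rw [HTerm.labelAt] at h; cases h

lemma decode_var {θ : Subst Sg} {s : HTerm Sg} (h : treeIsVar (θ.rt s)) :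
    ∃ z, z ∉ θ.dom ∧ ∃ N, ∀ i ≥ N, θ.iter i s = .var z := by
  obtain ⟨z, hz⟩ := h
  have h0 : θ.rt s [] = some (Sum.inr z) := by
    rw [hz]
    rfl
  unfold Subst.rt at h0
  by_cases hex : ∃ v : Option (Sg.Sym ⊕ ℕ), ∃ M : ℕ, ∀ i ≥ M, (θ.iter i s).labelAt [] = v
  · rw [dif_pos hex] at h0
    obtain ⟨M, hM⟩ := hex.choose_spec
    have hstab : ∀ i ≥ M, θ.iter i s = .var z := by
      intro i hi
      have := hM i hi
      rw [h0] at this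
      exact labelAt_nil_inr this
    have hznd : z ∉ θ.dom := by
      have h1 := hstab M le_rfl
      have h2 := hstab (M + 1) (by omega)
      rw [iter_succ', h1, apply_var] at h2
      intro hc
      exact hc h2
    exact ⟨z, hznd, M, hstab⟩
  · rw [dif_neg hex] at h0
    cases h0

/-! ### Independence of `res` from the base valuation, up to stable variables -/

lemma res_indep {θ : Subst Sg} (hθ : θ.InRSF) (v v' : ℕ → T Sg) :
    ∀ (s : HTerm Sg) (p : List ℕ),
      res θ hθ v s p = res θ hθ v' s p ∨
      ∃ q z, z ∉ θ.dom ∧ ∃ N, ∀ i ≥ N, (θ.iter i s).labelAt q = some (Sum.inr z)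
  | .var z, p => by
    by_cases hz : z ∈ θ.dom
    · rcases res_indep hθ v v' (θ.map z) p with h | ⟨q, z₀, hz₀, N, hst⟩
      · left
        rw [res_var, res_var, if_pos hz, if_pos hz, h]
      · right
        refine ⟨q, z₀, hz₀, N + 1, ?_⟩
        intro i hi
        rw [show i = (i - 1) + 1 by omega, iter_succ, apply_var]
        exact hst (i - 1) (by omega)
    · right
      refine ⟨[], z, hz, 0, ?_⟩
      intro i _
      rw [iter_var_not_dom hz i]
      rfl
  | .app f ts, [] => by
    left
    rw [res_app_nil, res_app_nil]
  | .app f ts, i :: q => by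
    by_cases h : i < Sg.arity f
    · rcases res_indep hθ v v' (ts ⟨i, h⟩) q with hh | ⟨q₀, z₀, hz₀, N, hst⟩
      · left
        rw [res_app_cons, res_app_cons, dif_pos h, dif_pos h, hh]
      · right
        refine ⟨i :: q₀, z₀, hz₀, N, ?_⟩
        intro k hk
        rw [iter_app, HTerm.labelAt, dif_pos h]
        exact hst k hk
    · left
      rw [res_app_cons, res_app_cons, dif_neg h, dif_neg h]
termination_by s p => (p.length, termRank θ s)
decreasing_by
  · exact Prod.Lex.right _ (termRank_lt hθ hz)
  · exact Prod.Lex.left _ _ (by simp)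
end AMGU

end AMGUAux
/-- If `σ ∈ VSubst`, `x ∈ hvars(σ)`, `vars(t) ⊆ hvars(σ)` and
each of `rt(x, σ)` and `rt(t, σ)` is ground or a variable, then for every
`τ ∈ mgs(σ ∪ {x = t})`: `hvars(σ) ⊆ hvars(τ)`. -/
theorem amgu_ground_or_free_case
    (Sg : Signature) (hconst : ∃ f, Sg.arity f = 0) (hposar : ∃ f, 0 < Sg.arity f)
    (σ : Subst Sg) (hσ : σ.IsVSubst)
    (x : ℕ) (t : HTerm Sg) (hbind : t ≠ HTerm.var x)
    (hxh : x ∈ σ.hvars) (hth : t.varsIn ⊆ σ.hvars)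
    (hgfx : treeVars (σ.rt (HTerm.var x)) = ∅ ∨ treeIsVar (σ.rt (HTerm.var x)))
    (hgft : treeVars (σ.rt t) = ∅ ∨ treeIsVar (σ.rt t)) :
    ∀ τ ∈ mgsRT (σ.eqs ∪ {(HTerm.var x, t)}), σ.hvars ⊆ τ.hvars := by
  classical
  intro τ hτ y hy
  obtain ⟨hτrsf, hτequiv, _⟩ := hτ
  have hσr : σ.InRSF := hσ.1
  by_contra hyτ
  -- the tree model
  let v₀ : ℕ → AMGU.T Sg := fun z => (HTerm.var z).labelAt
  have hv₀fin : ∀ z, AMGU.FinT (v₀ z) := fun z => AMGU.finT_leaf z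
  -- solutions of σ for arbitrary base valuations
  have solσ : ∀ v : ℕ → AMGU.T Sg, ∃ w : ℕ → AMGU.T Sg,
      (∀ z ∉ σ.dom, w z = v z) ∧ (AMGU.strucT Sg).Sat w σ.eqs :=
    fun v => ((AMGU.modelT Sg).uniqueness σ hσr v).exists
  obtain ⟨wσ, hwσv, hwσ⟩ := solσ v₀
  obtain ⟨wτ, hwτv, hwτ⟩ := ((AMGU.modelT Sg).uniqueness τ hτrsf v₀).exists
  have hwτE : (AMGU.strucT Sg).Sat wτ (σ.eqs ∪ {(HTerm.var x, t)}) :=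
    (hτequiv (AMGU.modelT Sg) wτ).mp hwτ
  have hwτσ : (AMGU.strucT Sg).Sat wτ σ.eqs := fun e he => hwτE e (Or.inl he)
  have hwτxt : (HTerm.var x).eval (AMGU.strucT Sg) wτ = t.eval (AMGU.strucT Sg) wτ :=
    hwτE (HTerm.var x, t) (Or.inr rfl)
  -- two solutions agree on ground-limit terms
  have agree : ∀ u : HTerm Sg, treeVars (σ.rt u) = ∅ →
      ∀ w w' : ℕ → AMGU.T Sg, (AMGU.strucT Sg).Sat w σ.eqs →
      (AMGU.strucT Sg).Sat w' σ.eqs →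
      u.eval (AMGU.strucT Sg) w = u.eval (AMGU.strucT Sg) w' := by
    intro u hg w w' hw hw'
    funext p
    rw [AMGU.sol_eq_res hσr hw (fun _ _ => rfl) u p,
      AMGU.sol_eq_res hσr hw' (fun _ _ => rfl) u p]
    rcases AMGU.res_indep hσr w w' u p with h | ⟨q, z, _, N, hst⟩
    · exact h
    · exfalso
      have h1 : σ.rt u q = some (Sum.inr z) := AMGU.rt_eq_of_stable hst
      have h2 : z ∈ treeVars (σ.rt u) := ⟨q, h1⟩
      rw [hg] at h2
      exact h2
  -- evaluation of terms with variable limits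
  have evar : ∀ (u : HTerm Sg) (z N : ℕ), (∀ i ≥ N, σ.iter i u = .var z) →
      ∀ w : ℕ → AMGU.T Sg, (AMGU.strucT Sg).Sat w σ.eqs →
      u.eval (AMGU.strucT Sg) w = w z := by
    intro u z N hN w hw
    rw [← AMGU.eval_iter_sol hw N u, hN N le_rfl]
    rfl
  -- it suffices to produce a good solution of the whole system
  suffices hgoal : ∃ w : ℕ → AMGU.T Sg, (AMGU.strucT Sg).Sat w σ.eqs ∧
      (HTerm.var x).eval (AMGU.strucT Sg) w = t.eval (AMGU.strucT Sg) w ∧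
      ∀ z ∉ σ.dom, AMGU.FinT (w z) by
    obtain ⟨w, hwsat, hwxt, hwoff⟩ := hgoal
    have hsatE : (AMGU.strucT Sg).Sat w (σ.eqs ∪ {(HTerm.var x, t)}) := by
      rintro e (he | he)
      · exact hwsat e he
      · rcases he with rfl
        exact hwxt
    have hsatτ : (AMGU.strucT Sg).Sat w τ.eqs :=
      (hτequiv (AMGU.modelT Sg) w).mpr hsatE
    have hfin : AMGU.FinT (w y) := AMGU.finT_hvars hwsat hwoff y hy
    exact AMGU.finT_contradiction hfin
      (fun n => AMGU.sol_deep hτrsf hsatτ n y hyτ)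
  -- case analysis on the limit hypotheses
  rcases hgfx with hgx | hvx <;> rcases hgft with hgt | hvt
  · -- both ground
    refine ⟨wσ, hwσ, ?_, fun z hz => by rw [hwσv z hz]; exact hv₀fin z⟩
    calc (HTerm.var x).eval (AMGU.strucT Sg) wσ
        = (HTerm.var x).eval (AMGU.strucT Sg) wτ := agree _ hgx wσ wτ hwσ hwτσ
      _ = t.eval (AMGU.strucT Sg) wτ := hwτxt
      _ = t.eval (AMGU.strucT Sg) wσ := agree t hgt wτ wσ hwτσ hwσ
  · -- x ground, t variable
    obtain ⟨z2, hz2, N2, hst2⟩ := AMGU.decode_var hvt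
    set G1 := (HTerm.var x).eval (AMGU.strucT Sg) wσ with hG1
    obtain ⟨w1, hw1v, hw1⟩ := solσ (Function.update v₀ z2 G1)
    refine ⟨w1, hw1, ?_, ?_⟩
    · rw [evar t z2 N2 hst2 w1 hw1, hw1v z2 hz2, Function.update_self z2 G1 v₀]
      exact (agree _ hgx w1 wσ hw1 hwσ)
    · intro z hz
      rw [hw1v z hz]
      by_cases hzz : z = z2
      · subst hzz
        rw [Function.update_self z G1 v₀]
        have : AMGU.FinT (wσ x) :=
          AMGU.finT_hvars hwσ (fun z' hz' => by rw [hwσv z' hz']; exact hv₀fin z') x hxh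
        exact this
      · rw [Function.update_of_ne hzz G1 v₀]
        exact hv₀fin z
  · -- x variable, t ground
    obtain ⟨z1, hz1, N1, hst1⟩ := AMGU.decode_var hvx
    set G2 := t.eval (AMGU.strucT Sg) wσ with hG2
    obtain ⟨w1, hw1v, hw1⟩ := solσ (Function.update v₀ z1 G2)
    refine ⟨w1, hw1, ?_, ?_⟩
    · rw [evar (HTerm.var x) z1 N1 hst1 w1 hw1, hw1v z1 hz1, Function.update_self z1 G2 v₀]
      exact (agree t hgt wσ w1 hwσ hw1)
    · intro z hz
      rw [hw1v z hz]
      by_cases hzz : z = z1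
      · subst hzz
        rw [Function.update_self z G2 v₀]
        refine AMGU.finT_eval ?_
        intro z' hz'
        exact AMGU.finT_hvars hwσ
          (fun z'' hz'' => by rw [hwσv z'' hz'']; exact hv₀fin z'') z' (hth hz')
      · rw [Function.update_of_ne hzz G2 v₀]
        exact hv₀fin z
  · -- both variables
    obtain ⟨z1, hz1, N1, hst1⟩ := AMGU.decode_var hvx
    obtain ⟨z2, hz2, N2, hst2⟩ := AMGU.decode_var hvt
    by_cases hz12 : z1 = z2
    · subst hz12
      refine ⟨wσ, hwσ, ?_, fun z hz => by rw [hwσv z hz]; exact hv₀fin z⟩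
      rw [evar (HTerm.var x) z1 N1 hst1 wσ hwσ, evar t z1 N2 hst2 wσ hwσ]
    · obtain ⟨w1, hw1v, hw1⟩ := solσ (Function.update v₀ z1 (v₀ z2))
      refine ⟨w1, hw1, ?_, ?_⟩
      · rw [evar (HTerm.var x) z1 N1 hst1 w1 hw1, evar t z2 N2 hst2 w1 hw1,
          hw1v z1 hz1, hw1v z2 hz2, Function.update_self,
          Function.update_of_ne (Ne.symm hz12)]
      · intro z hz
        rw [hw1v z hz]
        by_cases hzz : z = z1
        · subst hzz
          rw [Function.update_self]
          exact hv₀fin z2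
        · rw [Function.update_of_ne hzz]
          exact hv₀fin z
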